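/- Let E be the partial-sum-below operator on sequences over ℚ: (E a)_n = Σ_{k=0}^{n−1} a_k. Then for every sequence a : ℕ → ℚ and every n ≥ 1, the logarithm series of the partial-sum transformation evaluates to Σ_{j=1}^{n} ((−1)^{j+1}/j) · (E^j a)_n = Σ_{k=0}^{n−1} a_k/(n−k). -/

import Mathlib

/-- The partial-sum-below operator on sequences: `(E a) n = ∑_{k=0}^{n-1} a k`. -/
noncomputable def partialSumBelow (a : ℕ → ℚ) : ℕ → ℚ :=
  fun n => ∑ k ∈ Finset.range n, a k

/-!
By the hockey-stick identity, `E^(j+1)` has kernel `C(n-k-1, j)`: `(E^(j+1) a)_n =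
∑_{k<n} C(n-k-1, j) a_k`. The coefficient of `a_k` on the left is therefore
`∑_j (-1)^j C(m, j) / (j+1)` with `m = n-k-1`, which is `1/(m+1)` by the absorption identity
`(m+1) C(m, j) = (j+1) C(m+1, j+1)` and the vanishing of the alternating binomial sum.
-/

open Finset

theorem Nat.sum_range_choose_eq_choose_succ (M j : ℕ) :
    ∑ i ∈ range M, i.choose j = M.choose (j + 1) := by
  induction M with
  | zero => simp
  | succ M ih => rw [sum_range_succ, ih, Nat.choose_succ_succ, add_comm]

theorem Nat.sum_Ico_choose_sub (k n j : ℕ) :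
    ∑ m ∈ Ico (k + 1) n, (m - k - 1).choose j = (n - k - 1).choose (j + 1) := by
  rw [sum_Ico_eq_sum_range, Nat.sub_sub, ← Nat.sum_range_choose_eq_choose_succ]
  exact sum_congr rfl fun i _ => by congr 1; omega

theorem partialSumBelow_iterate_succ_apply (a : ℕ → ℚ) (j n : ℕ) :
    (partialSumBelow^[j + 1] a) n = ∑ k ∈ range n, ((n - k - 1).choose j : ℚ) * a k := by
  induction j generalizing n with
  | zero => simp [partialSumBelow]
  | succ j ih =>
    rw [Function.iterate_succ_apply']
    change ∑ m ∈ range n, (partialSumBelow^[j + 1] a) m = _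
    simp only [ih, range_eq_Ico]
    rw [← sum_Ico_Ico_comm']
    refine sum_congr rfl fun k _ => ?_
    rw [← sum_mul, ← Nat.cast_sum, Nat.sum_Ico_choose_sub]

theorem sum_range_neg_one_pow_mul_choose_div {K : Type*} [Field K] [CharZero K] {m N : ℕ}
    (h : m < N) :
    ∑ i ∈ range N, (-1 : K) ^ i * m.choose i / (i + 1) = 1 / (m + 1) := by
  have absorb (i : ℕ) : (m + 1 : K) * ((-1) ^ i * m.choose i / (i + 1)) =
      -((-1) ^ (i + 1) * (m + 1).choose (i + 1)) := by
    have hchoose :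
        ((m + 1 : ℕ) : K) * m.choose i = (m + 1).choose (i + 1) * ((i + 1 : ℕ) : K) := by
      exact_mod_cast Nat.add_one_mul_choose_eq m i
    push_cast at hchoose
    field_simp
    linear_combination (-1 : K) ^ i * hchoose
  have alternating : ∑ i ∈ range (N + 1), (-1 : K) ^ i * (m + 1).choose i = 0 := by
    have := Int.alternating_sum_range_choose_eq_choose (n := m) (m := N)
    rw [Nat.choose_eq_zero_of_lt h, Nat.cast_zero, mul_zero] at this
    exact_mod_cast this
  rw [sum_range_succ', pow_zero, Nat.choose_zero_right] at alternating
  rw [eq_div_iff (Nat.cast_add_one_ne_zero m), mul_comm, mul_sum]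
  simp only [absorb, sum_neg_distrib]
  push_cast at alternating
  linear_combination -alternating

theorem partialSumBelow_log (a : ℕ → ℚ) (n : ℕ) :
    ∑ j ∈ Finset.Icc 1 n, (-1 : ℚ) ^ (j + 1) / (j : ℚ) * (partialSumBelow^[j] a) n
      = ∑ k ∈ Finset.range n, a k / ((n - k : ℕ) : ℚ) := by
  rw [← Finset.Ico_add_one_right_eq_Icc, sum_Ico_eq_sum_range, Nat.add_sub_cancel]
  simp only [add_comm 1, partialSumBelow_iterate_succ_apply, mul_sum]
  rw [sum_comm]
  refine sum_congr rfl fun k hk => ?_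
  have hk : k < n := mem_range.1 hk
  calc ∑ i ∈ range n, (-1 : ℚ) ^ (i + 1 + 1) / ((i + 1 : ℕ) : ℚ) * ((n - k - 1).choose i * a k)
      = (∑ i ∈ range n, (-1 : ℚ) ^ i * (n - k - 1).choose i / (i + 1)) * a k := by
        rw [sum_mul]
        exact sum_congr rfl fun i _ => by push_cast; ring
    _ = a k / ((n - k : ℕ) : ℚ) := by
        have hcast : ((n - k : ℕ) : ℚ) = ((n - k - 1 : ℕ) : ℚ) + 1 := by norm_cast; omega
        rw [sum_range_neg_one_pow_mul_choose_div (by omega), hcast, one_div_mul_eq_div]
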